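/- Let < be a multiplicative order on the monomials of A. Let ρ_1,…,ρ_m ∈ I_A be homogeneous elements of degrees σ_1,…,σ_m ≥ 1, and for each j let w̃_j be the high term of ρ_j, i.e., the <-greatest monomial occurring with nonzero coefficient in ρ_j. If the sequence of words w̃_1,…,w̃_m is combinatorially free, then the sequence ρ_1,…,ρ_m is strongly free. -/

import Mathlib

/-!
Setup: `A = F_p⟨X_1,…,X_d⟩`, the free associative algebra over `F_p` on `d`
noncommuting variables, realized as the monoid algebra of the free monoid on `Fin d`.
-/

namespace MildStmt

/-- The free associative algebra `A = F_p⟨X_1,…,X_d⟩`. -/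
abbrev A (p d : ℕ) : Type := MonoidAlgebra (ZMod p) (FreeMonoid (Fin d))

/-- The generator `X_i` of `A`. -/
noncomputable def X (p d : ℕ) (i : Fin d) : A p d :=
  MonoidAlgebra.of (ZMod p) (FreeMonoid (Fin d)) (FreeMonoid.of i)

/-- The `τ`-weight of a word in the letters `X_1,…,X_d`. -/
def wt {d : ℕ} (τ : Fin d → ℕ) (w : FreeMonoid (Fin d)) : ℕ :=
  (w.toList.map τ).sum

/-- The degree-`n` homogeneous component `A_n` of `A`:
the `F_p`-span of the monomials of `τ`-weight `n`. -/
noncomputable def Asub (p d : ℕ) (τ : Fin d → ℕ) (n : ℕ) : Submodule (ZMod p) (A p d) :=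
  Submodule.span (ZMod p)
    {x | ∃ w : FreeMonoid (Fin d), wt τ w = n ∧
      x = MonoidAlgebra.of (ZMod p) (FreeMonoid (Fin d)) w}

/-- The two-sided ideal generated by a set `S ⊆ A`, as an `F_p`-submodule of `A`. -/
noncomputable def tsi (p d : ℕ) (S : Set (A p d)) : Submodule (ZMod p) (A p d) :=
  Submodule.span (ZMod p) {x | ∃ a s b, s ∈ S ∧ x = a * s * b}

/-- The augmentation ideal `I_A`: the two-sided ideal generated by `X_1,…,X_d`. -/
noncomputable def IA (p d : ℕ) : Submodule (ZMod p) (A p d) :=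
  tsi p d (Set.range (X p d))

/-- `dim_{F_p} B_n` where `B = A/R`, graded by the images `B_n` of the `A_n`,
with the convention that the dimension is `0` for negative `n`. -/
noncomputable def dimB (p d : ℕ) (R : Submodule (ZMod p) (A p d)) (τ : Fin d → ℕ)
    (n : ℤ) : ℕ :=
  if 0 ≤ n then Module.finrank (ZMod p) (Submodule.map R.mkQ (Asub p d τ n.toNat)) else 0

/-- The strong freeness condition for a sequence of homogeneous elements
`ρ_j` of degrees `σ_j`: the graded quotient `B = A/(ρ_1,…,ρ_m)` satisfies
`dim B_0 = 1` and `dim B_n − Σ_i dim B_{n−τ_i} + Σ_j dim B_{n−σ_j} = 0` for `n ≥ 1`. -/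
def StronglyFree (p d : ℕ) (τ : Fin d → ℕ) {m : ℕ} (σ : Fin m → ℕ)
    (ρ : Fin m → A p d) : Prop :=
  dimB p d (tsi p d (Set.range ρ)) τ 0 = 1 ∧
  ∀ n : ℤ, 1 ≤ n →
    (dimB p d (tsi p d (Set.range ρ)) τ n : ℤ)
      - ∑ i : Fin d, (dimB p d (tsi p d (Set.range ρ)) τ (n - (τ i : ℤ)) : ℤ)
      + ∑ j : Fin m, (dimB p d (tsi p d (Set.range ρ)) τ (n - (σ j : ℤ)) : ℤ) = 0

/-- Combinatorial freeness of a sequence of words. -/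
def CombFree {d m : ℕ} (w : Fin m → FreeMonoid (Fin d)) : Prop :=
  (∀ i j, i ≠ j → ∀ u v : FreeMonoid (Fin d), w j ≠ u * w i * v) ∧
  (∀ i j, ∀ x y x' y' : FreeMonoid (Fin d), x ≠ 1 → y ≠ 1 → x' ≠ 1 → y' ≠ 1 →
    w i = x * y → w j = x' * y' → x ≠ y')

/-- The coefficient of the monomial `w` in `ρ ∈ A`. -/
def coeff {p d : ℕ} (ρ : A p d) (w : FreeMonoid (Fin d)) : ZMod p :=
  ρ.coeff w

end MildStmt

/-!
Call a word normal if none of the high terms `w̃_j` is a factor of it. The elements `u ρ_j v`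
of the ideal `R = (ρ_1, …, ρ_m)` have high term `u w̃_j v`, so one such element for each non-normal
word of weight `n` gives a triangular, hence linearly independent, family in `R ∩ A_n`.
Combinatorial freeness makes any two occurrences of high terms in a word coincide or be disjoint,
and for disjoint occurrences `u ρ_j (s w̃_k t)` and `(u w̃_j s) ρ_k t` agree up to scalars modulo
elements with smaller high terms. By induction along the order the family therefore spans
`R ∩ A_n`, and `dim B_n` is the number `N_n` of normal words of weight `n`. Finally, a word `X_i u`
with `u` normal is either normal or uniquely `w̃_j u'` with `u'` normal, which gives
`Σ_i N_{n-τ_i} = N_n + Σ_j N_{n-σ_j}`.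
-/

namespace FreeMonoid

variable {α : Type*}

theorem mul_eq_mul_iff {a b c e : FreeMonoid α} :
    a * b = c * e ↔ (∃ s, c = a * s ∧ b = s * e) ∨ (∃ s, a = c * s ∧ e = s * b) :=
  List.append_eq_append_iff

theorem of_mul_eq_of_mul_iff {i i' : α} {u u' : FreeMonoid α} :
    of i * u = of i' * u' ↔ i = i' ∧ u = u' :=
  List.cons_eq_cons

theorem eq_one_of_mul_mul_eq_one {a x b : FreeMonoid α} (h : a * x * b = 1) : x = 1 := by
  have := congrArg length h
  simp only [length_mul, length_one] at this
  exact length_eq_zero.1 (by omega)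

theorem exists_eq_of_mul_of_ne_one {x : FreeMonoid α} (hx : x ≠ 1) : ∃ i c, x = of i * c := by
  induction x using FreeMonoid.casesOn with
  | one => exact absurd rfl hx
  | of_mul i c => exact ⟨i, c, rfl⟩

theorem finite_setOf_length_le [Finite α] (k : ℕ) : {x : FreeMonoid α | x.length ≤ k}.Finite :=
  List.finite_length_le α k

end FreeMonoid

theorem mul_mul_lt_mul_mul {M : Type*} [Mul M] [LT M] [MulLeftStrictMono M]
    [MulRightStrictMono M] {a b : M} (h : a < b) (u v : M) : u * a * v < u * b * v :=
  mul_lt_mul_left (mul_lt_mul_right h u) v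

theorem Finset.card_biUnion_image_mul_left {ι M : Type*} [Fintype ι] [DecidableEq M] [Mul M]
    [IsLeftCancelMul M] (f : ι → M) (S : ι → Finset M)
    (hf : ∀ i i' u u', f i * u = f i' * u' → i = i') :
    (univ.biUnion fun i => (S i).image (f i * ·)).card = ∑ i, (S i).card := by
  rw [card_biUnion]
  · exact sum_congr rfl fun i _ => card_image_of_injective _ (mul_right_injective _)
  · intro i _ i' _ hii'
    simp only [Function.onFun, disjoint_left, mem_image]
    rintro _ ⟨u, -, rfl⟩ ⟨u', -, h⟩
    exact hii' (hf _ _ _ _ h).symm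

namespace MonoidAlgebra

variable {K M : Type*}

def IsHighTerm [Semiring K] [LinearOrder M] (x : MonoidAlgebra K M) (w : M) : Prop :=
  x.coeff w ≠ 0 ∧ ∀ w', x.coeff w' ≠ 0 → w' ≤ w

theorem coeff_single_mul_mul_single [Semiring K] [Monoid M] [IsCancelMul M]
    (x : MonoidAlgebra K M) (u w v : M) :
    (single u 1 * x * single v 1).coeff (u * w * v) = x.coeff w := by
  rw [coeff_mul_single_mul, coeff_single_mul_mul, one_mul, mul_one]

theorem exists_of_coeff_single_mul_mul_single_ne_zero [Semiring K] [Monoid M]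
    {x : MonoidAlgebra K M} {u v y : M} (h : (single u 1 * x * single v 1).coeff y ≠ 0) :
    ∃ w, x.coeff w ≠ 0 ∧ y = u * w * v := by
  classical
  obtain ⟨y', hy', rfl⟩ :=
    Finset.mem_image.1 (support_coeff_mul_single_subset _ _ _ (Finsupp.mem_support_iff.2 h))
  obtain ⟨w, hw, rfl⟩ := Finset.mem_image.1 (support_coeff_single_mul_subset _ _ _ hy')
  exact ⟨w, Finsupp.mem_support_iff.1 hw, rfl⟩

theorem IsHighTerm.lt_of_ne [Semiring K] [LinearOrder M] {x : MonoidAlgebra K M} {w w' : M}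
    (h : IsHighTerm x w) (hw' : x.coeff w' ≠ 0) (hne : w' ≠ w) : w' < w :=
  (h.2 w' hw').lt_of_ne hne

theorem IsHighTerm.single_mul_mul_single [Semiring K] [Monoid M] [IsCancelMul M] [LinearOrder M]
    [MulLeftStrictMono M] [MulRightStrictMono M] {x : MonoidAlgebra K M} {w : M}
    (h : IsHighTerm x w) (u v : M) : IsHighTerm (single u 1 * x * single v 1) (u * w * v) := by
  refine ⟨by rw [coeff_single_mul_mul_single]; exact h.1, fun y hy => ?_⟩
  obtain ⟨w', hw', rfl⟩ := exists_of_coeff_single_mul_mul_single_ne_zero hy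
  rcases eq_or_ne w' w with rfl | hne
  · exact le_rfl
  · exact (mul_mul_lt_mul_mul (h.lt_of_ne hw' hne) u v).le

theorem linearIndependent_of_isHighTerm [Field K] [LinearOrder M] {ι : Type*}
    {f : ι → MonoidAlgebra K M} {ℓ : ι → M} (hℓ : Function.Injective ℓ)
    (h : ∀ i, IsHighTerm (f i) (ℓ i)) : LinearIndependent K f := by
  classical
  rw [linearIndependent_iff']
  intro s g hg i hi
  by_contra hgi
  obtain ⟨i₀, hi₀, hmax⟩ :=
    (s.filter (g · ≠ 0)).exists_max_image ℓ ⟨i, Finset.mem_filter.2 ⟨hi, hgi⟩⟩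
  rw [Finset.mem_filter] at hi₀
  have hcoeff : (∑ i ∈ s, g i • f i).coeff (ℓ i₀) = g i₀ * (f i₀).coeff (ℓ i₀) := by
    rw [coeff_sum, Finsupp.finsetSum_apply, Finset.sum_eq_single_of_mem i₀ hi₀.1]
    · rfl
    intro b hb hbi₀
    by_cases hgb : g b = 0
    · simp [hgb]
    have hlt : ℓ b < ℓ i₀ :=
      (hmax b (Finset.mem_filter.2 ⟨hb, hgb⟩)).lt_of_ne (hℓ.ne hbi₀)
    have hzero : (f b).coeff (ℓ i₀) = 0 := by_contra fun hne => (h b).2 _ hne |>.not_gt hlt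
    simp [hzero]
  rw [hg, coeff_zero, Finsupp.zero_apply] at hcoeff
  exact mul_ne_zero hi₀.2 (h i₀).1 hcoeff.symm

theorem coeff_ne_zero_of_coeff_erase_ne_zero [Semiring K] {x : MonoidAlgebra K M} {w m : M}
    (h : (erase m x).coeff w ≠ 0) : w ≠ m ∧ x.coeff w ≠ 0 := by
  classical
  rw [coeff_erase, Finsupp.erase_apply] at h
  split_ifs at h with hw
  · exact absurd rfl h
  · exact ⟨hw, h⟩

theorem mul_mem_of_forall_coeff_ne_zero [CommSemiring K] [Monoid M]
    {N : Submodule K (MonoidAlgebra K M)} {a y b : MonoidAlgebra K M}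
    (h : ∀ w, y.coeff w ≠ 0 → a * single w 1 * b ∈ N) : a * y * b ∈ N := by
  rw [← sum_coeff_single y, Finsupp.sum, Finset.mul_sum, Finset.sum_mul]
  refine N.sum_mem fun w hw => ?_
  rw [show single w (y.coeff w) = y.coeff w • single w (1 : K) by rw [smul_single', mul_one],
    mul_smul_comm, smul_mul_assoc]
  exact N.smul_mem _ (h w (Finsupp.mem_support_iff.1 hw))

end MonoidAlgebra

theorem Submodule.finrank_map_mkQ_add_finrank_inf {K V : Type*} [Field K] [AddCommGroup V]
    [Module K V] (R N : Submodule K V) [FiniteDimensional K N] :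
    Module.finrank K (N.map R.mkQ) + Module.finrank K ↥(R ⊓ N) = Module.finrank K N := by
  have h := LinearMap.finrank_range_add_finrank_ker (R.mkQ ∘ₗ N.subtype)
  rwa [LinearMap.range_comp, Submodule.range_subtype, LinearMap.ker_comp, Submodule.ker_mkQ,
    (Submodule.equivMapOfInjective _ N.injective_subtype _).finrank_eq,
    Submodule.map_comap_subtype, inf_comm] at h

theorem Submodule.mem_of_smul_sub_smul_mem {K V : Type*} [DivisionRing K] [AddCommGroup V]
    [Module K V] {N : Submodule K V} {a b : K} {x y : V} (ha : a ≠ 0) (h : a • x - b • y ∈ N)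
    (hy : y ∈ N) : x ∈ N :=
  (N.smul_mem_iff ha).1 (by simpa using N.add_mem h (N.smul_mem b hy))

namespace MildStmt

open FreeMonoid

section Words

variable {d : ℕ} {τ : Fin d → ℕ}

@[simp] theorem wt_one : wt τ 1 = 0 := rfl

@[simp] theorem wt_of (i : Fin d) : wt τ (of i) = τ i := by simp [wt, toList_of]

@[simp] theorem wt_mul (a b : FreeMonoid (Fin d)) : wt τ (a * b) = wt τ a + wt τ b := by
  simp [wt, toList_mul]

theorem length_le_wt (hτ : ∀ i, 1 ≤ τ i) (x : FreeMonoid (Fin d)) : x.length ≤ wt τ x := by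
  induction x using FreeMonoid.inductionOn' with
  | one => simp
  | of_mul i x ih => simp only [length_mul, length_of, wt_mul, wt_of]; grind

theorem eq_one_of_wt_eq_zero (hτ : ∀ i, 1 ≤ τ i) {x : FreeMonoid (Fin d)} (h : wt τ x = 0) :
    x = 1 :=
  length_eq_zero.1 (Nat.le_zero.1 (h ▸ length_le_wt hτ x))

end Words

section Normal

variable {α ι : Type*} (w : ι → FreeMonoid α)

def IsNormal (x : FreeMonoid α) : Prop := ∀ j u v, x ≠ u * w j * v

variable {w}

theorem IsNormal.of_factor {a x b : FreeMonoid α} (h : IsNormal w (a * x * b)) : IsNormal w x :=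
  fun j u v hx => h j (a * u) (v * b) (by simp [hx, mul_assoc])

theorem isNormal_one (hne : ∀ j, w j ≠ 1) : IsNormal w 1 := fun j _ _ h =>
  hne j (eq_one_of_mul_mul_eq_one h.symm)

theorem IsNormal.exists_eq_of_mul {x : FreeMonoid α} (hx : IsNormal w x) (h1 : x ≠ 1) :
    ∃ i u, IsNormal w u ∧ x = of i * u := by
  obtain ⟨i, u, rfl⟩ := exists_eq_of_mul_of_ne_one h1
  exact ⟨i, u, (show IsNormal w (of i * u * 1) by rwa [mul_one]).of_factor, rfl⟩

theorem IsNormal.of_mul_or (hne : ∀ j, w j ≠ 1) {u : FreeMonoid α} (hu : IsNormal w u) (i : α) :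
    IsNormal w (of i * u) ∨ ∃ j u', IsNormal w u' ∧ of i * u = w j * u' := by
  refine or_iff_not_imp_left.2 fun hN => ?_
  obtain ⟨j, a, b, h⟩ : ∃ j a b, of i * u = a * w j * b := by simpa [IsNormal] using hN
  induction a using FreeMonoid.casesOn with
  | of_mul i' a =>
    rw [mul_assoc, mul_assoc, of_mul_eq_of_mul_iff] at h
    exact absurd (by rw [h.2, mul_assoc]) (hu j a b)
  | one =>
    refine ⟨j, b, ?_, by rw [h, one_mul]⟩
    obtain ⟨i', c, hw⟩ := exists_eq_of_mul_of_ne_one (hne j)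
    rw [one_mul, hw, mul_assoc, of_mul_eq_of_mul_iff] at h
    exact (show IsNormal w (c * b * 1) by rwa [mul_one, ← h.2]).of_factor

end Normal

section CombFree

variable {d m : ℕ} {w : Fin m → FreeMonoid (Fin d)}

theorem CombFree.eq_of_factor (hcf : CombFree w) {j k : Fin m} {a b : FreeMonoid (Fin d)}
    (h : w k = a * w j * b) : j = k ∧ a = 1 ∧ b = 1 := by
  obtain rfl : j = k := by_contra fun hjk => hcf.1 j k hjk a b h
  have hlen := congrArg length h
  simp only [length_mul] at hlen
  exact ⟨rfl, length_eq_zero.1 (by omega), length_eq_zero.1 (by omega)⟩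

theorem CombFree.no_overlap (hcf : CombFree w) {j k : Fin m} {a t r : FreeMonoid (Fin d)}
    (hj : w j = a * t) (hk : w k = t * r) : a = 1 ∨ t = 1 ∨ r = 1 := by
  by_contra! h
  exact hcf.2 k j t r a t h.2.1 h.2.2 h.1 h.2.1 hk hj rfl

theorem CombFree.mul_eq_mul_cases (hcf : CombFree w) {j k : Fin m} {a v v' : FreeMonoid (Fin d)}
    (h : w j * v = a * (w k * v')) :
    (a = 1 ∧ j = k ∧ v = v') ∨ ∃ s, a = w j * s ∧ v = s * w k * v' := by
  rcases FreeMonoid.mul_eq_mul_iff.1 h with ⟨s, ha, hv⟩ | ⟨t, hj, ht⟩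
  · exact Or.inr ⟨s, ha, by rw [hv, mul_assoc]⟩
  rcases FreeMonoid.mul_eq_mul_iff.1 ht with ⟨r, rfl, hv'⟩ | ⟨r, hk, hv⟩
  · obtain ⟨rfl, rfl, rfl⟩ := hcf.eq_of_factor (hj.trans (mul_assoc _ _ _).symm)
    exact Or.inl ⟨rfl, rfl, by simpa using hv'.symm⟩
  rcases hcf.no_overlap hj hk with rfl | rfl | rfl
  · rw [one_mul] at hj
    obtain ⟨rfl, -, rfl⟩ := hcf.eq_of_factor (show w k = 1 * w j * r by rw [hk, hj, one_mul])
    exact Or.inl ⟨rfl, rfl, by simpa using hv⟩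
  · exact Or.inr ⟨1, by rw [hj, mul_one, mul_one], by rw [hv, hk, one_mul, one_mul]⟩
  · rw [mul_one] at hk
    obtain ⟨rfl, rfl, -⟩ := hcf.eq_of_factor (show w j = a * w k * 1 by rw [hj, hk, mul_one])
    exact Or.inl ⟨rfl, rfl, by simpa using hv⟩

theorem CombFree.occurrence_cases (hcf : CombFree w) {j k : Fin m} {u v u' v' : FreeMonoid (Fin d)}
    (h : u * w j * v = u' * w k * v') :
    (u = u' ∧ j = k ∧ v = v') ∨ (∃ s, u' = u * w j * s ∧ v = s * w k * v') ∨
      (∃ s, u = u' * w k * s ∧ v' = s * w j * v) := by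
  rw [mul_assoc, mul_assoc] at h
  rcases FreeMonoid.mul_eq_mul_iff.1 h with ⟨a, rfl, h'⟩ | ⟨a, rfl, h'⟩
  · rcases hcf.mul_eq_mul_cases h' with ⟨rfl, rfl, rfl⟩ | ⟨s, rfl, hv⟩
    · exact Or.inl ⟨(mul_one u).symm, rfl, rfl⟩
    · exact Or.inr (Or.inl ⟨s, (mul_assoc _ _ _).symm, hv⟩)
  · rcases hcf.mul_eq_mul_cases h' with ⟨rfl, rfl, rfl⟩ | ⟨s, rfl, hv⟩
    · exact Or.inl ⟨mul_one u', rfl, rfl⟩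
    · exact Or.inr (Or.inr ⟨s, (mul_assoc _ _ _).symm, hv⟩)

theorem CombFree.eq_of_mul_eq_mul (hcf : CombFree w) (hne : ∀ j, w j ≠ 1) {j k : Fin m}
    {u u' : FreeMonoid (Fin d)} (h : w j * u = w k * u') : j = k ∧ u = u' := by
  rcases hcf.occurrence_cases (u := 1) (u' := 1) (by simpa using h) with
    ⟨-, hjk, huu⟩ | ⟨s, h1, -⟩ | ⟨s, h1, -⟩
  · exact ⟨hjk, huu⟩
  · exact absurd (eq_one_of_mul_mul_eq_one h1.symm) (hne j)
  · exact absurd (eq_one_of_mul_mul_eq_one h1.symm) (hne k)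

theorem CombFree.isNormal_mul (hcf : CombFree w) {j : Fin m} {i : Fin d} {c u : FreeMonoid (Fin d)}
    (hu : IsNormal w u) (hj : w j = of i * c) : IsNormal w (c * u) := by
  intro k a b h
  have hW : 1 * w j * u = (of i * a) * w k * b := by
    rw [one_mul, hj, mul_assoc, h]
    simp only [mul_assoc]
  rcases hcf.occurrence_cases hW with ⟨h1, -⟩ | ⟨s, -, hs⟩ | ⟨s, h1, -⟩
  · exact absurd (congrArg length h1) (by simp only [length_mul, length_of, length_one]; omega)
  · exact hu k s b hs
  · exact absurd (congrArg length h1) (by simp only [length_mul, length_of, length_one]; omega)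

end CombFree

section Counting

open scoped Classical
open Finset

variable {d m : ℕ} (τ : Fin d → ℕ) (w : Fin m → FreeMonoid (Fin d))

-- Indexed by `ℤ`, so that negative weights give `∅`, as in `dimB`.
noncomputable def wordsOfWt (n : ℤ) : Finset (FreeMonoid (Fin d)) :=
  (FreeMonoid.finite_setOf_length_le n.toNat).toFinset.filter fun x => (wt τ x : ℤ) = n

noncomputable def normalWords (n : ℤ) : Finset (FreeMonoid (Fin d)) :=
  (wordsOfWt τ n).filter (IsNormal w)

noncomputable def reducibleWords (n : ℤ) : Finset (FreeMonoid (Fin d)) :=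
  (wordsOfWt τ n).filter fun x => ¬ IsNormal w x

variable {τ w}

theorem mem_wordsOfWt (hτ : ∀ i, 1 ≤ τ i) {n : ℤ} {x : FreeMonoid (Fin d)} :
    x ∈ wordsOfWt τ n ↔ (wt τ x : ℤ) = n := by
  rw [wordsOfWt, mem_filter, Set.Finite.mem_toFinset, Set.mem_ofPred_eq, and_iff_right_iff_imp]
  intro h
  have := length_le_wt hτ x
  omega

theorem mem_normalWords (hτ : ∀ i, 1 ≤ τ i) {n : ℤ} {x : FreeMonoid (Fin d)} :
    x ∈ normalWords τ w n ↔ IsNormal w x ∧ (wt τ x : ℤ) = n := by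
  rw [normalWords, mem_filter, mem_wordsOfWt hτ, and_comm]

theorem mem_reducibleWords (hτ : ∀ i, 1 ≤ τ i) {n : ℤ} {x : FreeMonoid (Fin d)} :
    x ∈ reducibleWords τ w n ↔ ¬ IsNormal w x ∧ (wt τ x : ℤ) = n := by
  rw [reducibleWords, mem_filter, mem_wordsOfWt hτ, and_comm]

theorem card_wordsOfWt (n : ℤ) :
    (wordsOfWt τ n).card = (normalWords τ w n).card + (reducibleWords τ w n).card :=
  (card_filter_add_card_filter_not _).symm

theorem normalWords_zero (hτ : ∀ i, 1 ≤ τ i) (hne : ∀ j, w j ≠ 1) : normalWords τ w 0 = {1} := by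
  ext x
  rw [mem_normalWords hτ, mem_singleton]
  refine ⟨fun h => eq_one_of_wt_eq_zero hτ (by exact_mod_cast h.2), ?_⟩
  rintro rfl
  exact ⟨isNormal_one hne, rfl⟩

-- Since `u` is normal, a factor `w j` of `of i * u` is a prefix; conversely, dropping the first
-- letter of `w j * u` leaves a normal word, because `w j` overlaps no `w k`.
theorem biUnion_image_of_mul_normalWords (hτ : ∀ i, 1 ≤ τ i) (hcf : CombFree w)
    (hne : ∀ j, w j ≠ 1) {n : ℤ} (hn : 1 ≤ n) :
    univ.biUnion (fun i => (normalWords τ w (n - τ i)).image (of i * ·))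
      = normalWords τ w n
        ∪ univ.biUnion fun j => (normalWords τ w (n - wt τ (w j))).image (w j * ·) := by
  ext x
  simp only [mem_union, mem_biUnion, mem_univ, true_and, mem_image, mem_normalWords hτ]
  constructor
  · rintro ⟨i, u, ⟨hu, hwt⟩, rfl⟩
    rcases hu.of_mul_or hne i with hN | ⟨j, u', hu', h⟩
    · exact Or.inl ⟨hN, by push_cast [wt_mul, wt_of]; omega⟩
    · have := congrArg (wt τ) h
      simp only [wt_mul, wt_of] at this
      exact Or.inr ⟨j, u', ⟨hu', by omega⟩, h.symm⟩
  · rintro (⟨hN, hwt⟩ | ⟨j, u, ⟨hu, hwt⟩, rfl⟩)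
    · obtain ⟨i, u, hu, rfl⟩ := hN.exists_eq_of_mul (by rintro rfl; simp at hwt; omega)
      push_cast [wt_mul, wt_of] at hwt
      exact ⟨i, u, ⟨hu, by omega⟩, rfl⟩
    · obtain ⟨i, c, hc⟩ := exists_eq_of_mul_of_ne_one (hne j)
      have hwc := congrArg (wt τ) hc
      simp only [wt_mul, wt_of] at hwc
      exact ⟨i, c * u, ⟨hcf.isNormal_mul hu hc, by push_cast [wt_mul]; omega⟩,
        by rw [hc, mul_assoc]⟩

theorem sum_card_normalWords (hτ : ∀ i, 1 ≤ τ i) (hcf : CombFree w) (hne : ∀ j, w j ≠ 1)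
    {n : ℤ} (hn : 1 ≤ n) :
    ∑ i, (normalWords τ w (n - τ i)).card
      = (normalWords τ w n).card + ∑ j, (normalWords τ w (n - wt τ (w j))).card := by
  have hdisj : Disjoint (normalWords τ w n)
      (univ.biUnion fun j => (normalWords τ w (n - wt τ (w j))).image (w j * ·)) := by
    simp only [disjoint_left, mem_biUnion, mem_image, mem_normalWords hτ]
    rintro _ ⟨hN, -⟩ ⟨j, -, u, -, rfl⟩
    exact hN j 1 u (one_mul _).symm
  rw [← card_biUnion_image_mul_left of _ fun i i' u u' h => (of_mul_eq_of_mul_iff.1 h).1,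
    biUnion_image_of_mul_normalWords hτ hcf hne hn, card_union_of_disjoint hdisj,
    card_biUnion_image_mul_left w _ fun j j' u u' h => (hcf.eq_of_mul_eq_mul hne h).1]

end Counting

section GradedPieces

open MonoidAlgebra Submodule

variable {p d m : ℕ} {τ : Fin d → ℕ}

theorem Asub_eq_supported (n : ℕ) :
    Asub p d τ n = supported (ZMod p) (ZMod p) {w | wt τ w = n} := by
  rw [Asub, supported_eq_span_single]
  congr 1
  ext x
  simp [of_apply, eq_comm]

theorem mem_Asub_iff {n : ℕ} {x : A p d} : x ∈ Asub p d τ n ↔ ∀ w, x.coeff w ≠ 0 → wt τ w = n := by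
  rw [Asub_eq_supported, mem_supported']
  exact forall_congr' fun w => not_imp_comm

theorem Asub_eq_supported_wordsOfWt (hτ : ∀ i, 1 ≤ τ i) (n : ℕ) :
    Asub p d τ n = supported (ZMod p) (ZMod p) ↑(wordsOfWt τ n) := by
  rw [Asub_eq_supported]
  congr 1
  ext x
  simp [mem_wordsOfWt hτ]

theorem finite_Asub (hτ : ∀ i, 1 ≤ τ i) (n : ℕ) : Module.Finite (ZMod p) (Asub p d τ n) := by
  rw [Asub_eq_supported_wordsOfWt hτ]
  exact Module.Finite.equiv (supportedEquivFinsupp _).symm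

theorem finrank_Asub [Fact p.Prime] (hτ : ∀ i, 1 ≤ τ i) (n : ℕ) :
    Module.finrank (ZMod p) (Asub p d τ n) = (wordsOfWt τ n).card := by
  rw [Asub_eq_supported_wordsOfWt hτ, (supportedEquivFinsupp _).finrank_eq,
    Module.finrank_finsupp_self]
  simp

theorem single_mul_mul_single_mem_Asub {k : ℕ} {x : A p d} (hx : x ∈ Asub p d τ k)
    (u v : FreeMonoid (Fin d)) :
    single u 1 * x * single v 1 ∈ Asub p d τ (wt τ u + k + wt τ v) := by
  rw [mem_Asub_iff] at hx ⊢
  intro y hy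
  obtain ⟨w, hw, rfl⟩ := exists_of_coeff_single_mul_mul_single_ne_zero hy
  rw [wt_mul, wt_mul, hx w hw]

noncomputable def wtProj (τ : Fin d → ℕ) (n : ℕ) : A p d →ₗ[ZMod p] A p d where
  toFun x := ofCoeff (x.coeff.filter fun w => wt τ w = n)
  map_add' _ _ := congrArg ofCoeff Finsupp.filter_add
  map_smul' _ _ := congrArg ofCoeff Finsupp.filter_smul

theorem wtProj_of_mem_Asub {n k : ℕ} {x : A p d} (hx : x ∈ Asub p d τ k) :
    wtProj τ n x = if k = n then x else 0 := by
  rw [mem_Asub_iff] at hx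
  apply coeff_injective
  ext w
  change Finsupp.filter _ _ w = _
  rw [Finsupp.filter_apply]
  by_cases hw : x.coeff w = 0
  · split_ifs <;> simp [hw]
  · have := hx w hw
    split_ifs <;> simp_all

theorem tsi_range_eq_span (ρ : Fin m → A p d) :
    tsi p d (Set.range ρ) = span (ZMod p) {x | ∃ u j v, x = single u 1 * ρ j * single v 1} := by
  apply le_antisymm
  · rw [tsi, span_le]
    rintro _ ⟨x, _, y, ⟨j, rfl⟩, rfl⟩
    have hright (u : FreeMonoid (Fin d)) : single u 1 * ρ j * y * 1 ∈ span (ZMod p)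
        {x | ∃ u j v, x = single u 1 * ρ j * single v 1} :=
      mul_mem_of_forall_coeff_ne_zero fun v _ => subset_span ⟨u, j, v, mul_one _⟩
    simpa [mul_assoc] using mul_mem_of_forall_coeff_ne_zero (a := 1) (y := x) (b := ρ j * y)
      fun u _ => by simpa [mul_assoc] using hright u
  · rw [span_le]
    rintro _ ⟨u, j, v, rfl⟩
    exact subset_span ⟨single u 1, ρ j, single v 1, ⟨j, rfl⟩, rfl⟩

end GradedPieces

section QuotientDimension

open MonoidAlgebra Submodule

variable {p d m : ℕ} {τ : Fin d → ℕ} {σ : Fin m → ℕ} {ρ : Fin m → A p d}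
  {wh : Fin m → FreeMonoid (Fin d)} [LinearOrder (FreeMonoid (Fin d))]
  [MulLeftStrictMono (FreeMonoid (Fin d))] [MulRightStrictMono (FreeMonoid (Fin d))]

-- Both terms come from splitting off a high term in `u ρ_j s ρ_k t`, at `ρ_k` resp. `ρ_j`;
-- the remainders only involve monomials below `u * wh j * s * wh k * t`.
theorem smul_sub_smul_mem_of_lt (hhigh : ∀ j, IsHighTerm (ρ j) (wh j))
    (hρ : ∀ j, ρ j ∈ Asub p d τ (σ j)) {N : Submodule (ZMod p) (A p d)}
    (u s t : FreeMonoid (Fin d)) (j k : Fin m)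
    (hN : ∀ u' j' v', u' * wh j' * v' < u * wh j * s * wh k * t →
      wt τ (u' * wh j' * v') = wt τ (u * wh j * s * wh k * t) →
      single u' 1 * ρ j' * single v' 1 ∈ N) :
    (ρ k).coeff (wh k) • (single u 1 * ρ j * single (s * wh k * t) 1)
      - (ρ j).coeff (wh j) • (single (u * wh j * s) 1 * ρ k * single t 1) ∈ N := by
  have hwt : ∀ j w, (ρ j).coeff w ≠ 0 → wt τ w = wt τ (wh j) := fun j w hw =>
    (mem_Asub_iff.1 (hρ j) w hw).trans (mem_Asub_iff.1 (hρ j) _ (hhigh j).1).symm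
  have hsingle (w : FreeMonoid (Fin d)) (c : ZMod p) : single w c = c • single w 1 := by
    rw [smul_single', mul_one]
  have hmul (a b : FreeMonoid (Fin d)) : single (a * b) (1 : ZMod p) = single a 1 * single b 1 := by
    rw [single_mul_single, mul_one]
  have hsplit : ∀ j, ρ j = (ρ j).coeff (wh j) • single (wh j) 1 + erase (wh j) (ρ j) := fun j => by
    rw [← hsingle, single_add_erase]
  have key : (ρ k).coeff (wh k) • (single u 1 * ρ j * single (s * wh k * t) 1)
      - (ρ j).coeff (wh j) • (single (u * wh j * s) 1 * ρ k * single t 1)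
      = single u 1 * erase (wh j) (ρ j) * (single s 1 * ρ k * single t 1)
        - single u 1 * ρ j * single s 1 * erase (wh k) (ρ k) * single t 1 := by
    conv_rhs => rw [eq_sub_of_add_eq' (hsplit j).symm, eq_sub_of_add_eq' (hsplit k).symm]
    simp only [hmul, mul_sub, sub_mul, smul_mul_assoc, mul_smul_comm, mul_assoc]
    abel
  rw [key]
  refine N.sub_mem (mul_mem_of_forall_coeff_ne_zero fun w hw => ?_)
    (mul_mem_of_forall_coeff_ne_zero fun w hw => ?_)
  · obtain ⟨hne, hw⟩ := coeff_ne_zero_of_coeff_erase_ne_zero hw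
    have hlt := mul_mul_lt_mul_mul ((hhigh j).lt_of_ne hw hne) u (s * wh k * t)
    convert hN (u * w * s) k t (by simpa only [mul_assoc] using hlt)
      (by simp only [wt_mul, hwt j w hw, add_assoc]) using 1
    simp only [hmul, mul_assoc]
  · obtain ⟨hne, hw⟩ := coeff_ne_zero_of_coeff_erase_ne_zero hw
    have hlt := mul_mul_lt_mul_mul ((hhigh k).lt_of_ne hw hne) (u * wh j * s) t
    convert hN u j (s * w * t) (by simpa only [mul_assoc] using hlt)
      (by simp only [wt_mul, hwt k w hw, add_assoc]) using 1
    simp only [hmul, mul_assoc]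

theorem single_mul_mul_single_mem_span [Fact p.Prime] (hτ : ∀ i, 1 ≤ τ i) (hcf : CombFree wh)
    (hhigh : ∀ j, IsHighTerm (ρ j) (wh j)) (hρ : ∀ j, ρ j ∈ Asub p d τ (σ j))
    {g : FreeMonoid (Fin d) → A p d}
    (hg : ∀ W, ¬ IsNormal wh W → ∃ u j v, W = u * wh j * v ∧ g W = single u 1 * ρ j * single v 1)
    {n : ℕ} {u v : FreeMonoid (Fin d)} {j : Fin m} (hn : wt τ (u * wh j * v) = n) :
    single u 1 * ρ j * single v 1 ∈ span (ZMod p) (g '' ↑(reducibleWords τ wh n)) := by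
  set G := span (ZMod p) (g '' ↑(reducibleWords τ wh n))
  have hwf : {W : FreeMonoid (Fin d) | wt τ W = n}.WellFoundedOn (· < ·) :=
    ((FreeMonoid.finite_setOf_length_le n).subset
      fun W hW => (length_le_wt hτ W).trans_eq hW).wellFoundedOn
  refine hwf.induction (P := fun W => ∀ u j v, W = u * wh j * v →
    single u 1 * ρ j * single v 1 ∈ G) hn (fun W hW ih u j v hWeq => ?_) u j v rfl
  have hred : ¬ IsNormal wh W := fun hN => hN j u v hWeq
  obtain ⟨u', j', v', hW', hgW⟩ := hg W hred
  have hgmem : g W ∈ G :=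
    subset_span ⟨W, (mem_reducibleWords hτ).2 ⟨hred, by exact_mod_cast hW⟩, rfl⟩
  have hlower : ∀ u'' j'' v'', u'' * wh j'' * v'' < W → wt τ (u'' * wh j'' * v'') = wt τ W →
      single u'' 1 * ρ j'' * single v'' 1 ∈ G :=
    fun u'' j'' v'' hlt hwt => ih _ (hwt.trans hW) hlt u'' j'' v'' rfl
  rcases hcf.occurrence_cases (hWeq.symm.trans hW') with
    ⟨rfl, rfl, rfl⟩ | ⟨s, rfl, rfl⟩ | ⟨s, rfl, rfl⟩
  · rwa [← hgW]
  · have h := smul_sub_smul_mem_of_lt hhigh hρ u s v' j j' (N := G)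
      (by simpa only [hWeq, mul_assoc] using hlower)
    rw [← hgW] at h
    exact mem_of_smul_sub_smul_mem (hhigh j').1 h hgmem
  · have h := smul_sub_smul_mem_of_lt hhigh hρ u' s v j' j (N := G)
      (by simpa only [hWeq, mul_assoc] using hlower)
    rw [← hgW, ← neg_mem_iff, neg_sub] at h
    exact mem_of_smul_sub_smul_mem (hhigh j').1 h hgmem

theorem tsi_inf_Asub_le_span [Fact p.Prime] (hτ : ∀ i, 1 ≤ τ i) (hcf : CombFree wh)
    (hhigh : ∀ j, IsHighTerm (ρ j) (wh j)) (hρ : ∀ j, ρ j ∈ Asub p d τ (σ j))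
    {g : FreeMonoid (Fin d) → A p d}
    (hg : ∀ W, ¬ IsNormal wh W → ∃ u j v, W = u * wh j * v ∧ g W = single u 1 * ρ j * single v 1)
    (n : ℕ) :
    tsi p d (Set.range ρ) ⊓ Asub p d τ n ≤ span (ZMod p) (g '' ↑(reducibleWords τ wh n)) := by
  rintro x ⟨hxR, hxA⟩
  rw [← show wtProj τ n x = x by rw [wtProj_of_mem_Asub hxA, if_pos rfl]]
  rw [tsi_range_eq_span] at hxR
  refine (show (span _ _).map (wtProj τ n) ≤ _ from ?_) ⟨x, hxR, rfl⟩
  rw [map_span, span_le]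
  rintro _ ⟨_, ⟨u, j, v, rfl⟩, rfl⟩
  rw [wtProj_of_mem_Asub (single_mul_mul_single_mem_Asub (hρ j) u v)]
  split_ifs with hn
  · refine single_mul_mul_single_mem_span hτ hcf hhigh hρ hg ?_
    rwa [wt_mul, wt_mul, mem_Asub_iff.1 (hρ j) _ (hhigh j).1]
  · exact zero_mem _

theorem finrank_tsi_inf_Asub [Fact p.Prime] (hτ : ∀ i, 1 ≤ τ i) (hcf : CombFree wh)
    (hhigh : ∀ j, IsHighTerm (ρ j) (wh j)) (hρ : ∀ j, ρ j ∈ Asub p d τ (σ j)) (n : ℕ) :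
    Module.finrank (ZMod p) ↥(tsi p d (Set.range ρ) ⊓ Asub p d τ n)
      = (reducibleWords τ wh n).card := by
  have hex (W : FreeMonoid (Fin d)) : ∃ y : A p d, ¬ IsNormal wh W →
      ∃ u j v, W = u * wh j * v ∧ y = single u 1 * ρ j * single v 1 := by
    by_cases hW : IsNormal wh W
    · exact ⟨0, absurd hW⟩
    · obtain ⟨j, u, v, h⟩ : ∃ j u v, W = u * wh j * v := by simpa [IsNormal] using hW
      exact ⟨_, fun _ => ⟨u, j, v, h, rfl⟩⟩
  choose g hg using hex
  have hgW : ∀ W ∈ reducibleWords τ wh n,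
      g W ∈ tsi p d (Set.range ρ) ⊓ Asub p d τ n ∧ IsHighTerm (g W) W := by
    intro W hW
    obtain ⟨hred, hwt⟩ := (mem_reducibleWords hτ).1 hW
    obtain ⟨u, j, v, rfl, hgW⟩ := hg W hred
    refine ⟨⟨?_, ?_⟩, hgW ▸ (hhigh j).single_mul_mul_single u v⟩
    · exact hgW ▸ subset_span ⟨single u 1, ρ j, single v 1, ⟨j, rfl⟩, rfl⟩
    · have := single_mul_mul_single_mem_Asub (hρ j) u v
      rwa [← hgW, ← mem_Asub_iff.1 (hρ j) _ (hhigh j).1, ← wt_mul, ← wt_mul,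
        show wt τ (u * wh j * v) = n by exact_mod_cast hwt] at this
  apply le_antisymm
  · have : FiniteDimensional (ZMod p) (span (ZMod p) (g '' ↑(reducibleWords τ wh n))) :=
      FiniteDimensional.span_of_finite _ ((reducibleWords τ wh n).finite_toSet.image g)
    refine (Submodule.finrank_mono (tsi_inf_Asub_le_span hτ hcf hhigh hρ hg n)).trans ?_
    rw [← Finset.coe_image]
    exact (finrank_span_finset_le_card _).trans Finset.card_image_le
  · have hli : LinearIndependent (ZMod p) fun W : reducibleWords τ wh n => g W :=
      linearIndependent_of_isHighTerm Subtype.val_injective fun W => (hgW W W.2).2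
    have := finite_Asub (p := p) hτ n
    have : FiniteDimensional (ZMod p) ↥(tsi p d (Set.range ρ) ⊓ Asub p d τ n) :=
      Submodule.finiteDimensional_of_le inf_le_right
    rw [← Fintype.card_coe, ← finrank_span_eq_card hli]
    exact Submodule.finrank_mono (span_le.2 (Set.range_subset_iff.2 fun W => (hgW W W.2).1))

theorem finrank_map_mkQ_Asub [Fact p.Prime] (hτ : ∀ i, 1 ≤ τ i) (hcf : CombFree wh)
    (hhigh : ∀ j, IsHighTerm (ρ j) (wh j)) (hρ : ∀ j, ρ j ∈ Asub p d τ (σ j)) (n : ℕ) :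
    Module.finrank (ZMod p) ↥((Asub p d τ n).map (tsi p d (Set.range ρ)).mkQ)
      = (normalWords τ wh n).card := by
  have := finite_Asub (p := p) hτ n
  have h := Submodule.finrank_map_mkQ_add_finrank_inf (tsi p d (Set.range ρ)) (Asub p d τ n)
  rw [finrank_tsi_inf_Asub hτ hcf hhigh hρ, finrank_Asub hτ, card_wordsOfWt (w := wh)] at h
  omega

theorem dimB_eq_card_normalWords [Fact p.Prime] (hτ : ∀ i, 1 ≤ τ i) (hcf : CombFree wh)
    (hhigh : ∀ j, IsHighTerm (ρ j) (wh j)) (hρ : ∀ j, ρ j ∈ Asub p d τ (σ j)) (n : ℤ) :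
    dimB p d (tsi p d (Set.range ρ)) τ n = (normalWords τ wh n).card := by
  rw [dimB]
  split_ifs with hn
  · rw [finrank_map_mkQ_Asub hτ hcf hhigh hρ, Int.toNat_of_nonneg hn]
  · refine (Finset.card_eq_zero.2 (Finset.eq_empty_of_forall_notMem fun x hx => ?_)).symm
    rw [mem_normalWords hτ] at hx
    omega

end QuotientDimension

theorem stmt_4_general (p d m : ℕ) [Fact p.Prime]
    (τ : Fin d → ℕ) (hτ : ∀ i, 1 ≤ τ i)
    (σ : Fin m → ℕ) (hσ : ∀ j, 1 ≤ σ j)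
    (ρ : Fin m → A p d)
    (hρhom : ∀ j, ρ j ∈ Asub p d τ (σ j))
    -- `lt` is a multiplicative order on the monomials:
    (lt : FreeMonoid (Fin d) → FreeMonoid (Fin d) → Prop)
    (hirr : ∀ w, ¬ lt w w)
    (htrans : ∀ w w' w'', lt w w' → lt w' w'' → lt w w'')
    (htri : ∀ w w', lt w w' ∨ w = w' ∨ lt w' w)
    (hmul : ∀ α α' β γ, lt α α' → lt (β * α * γ) (β * α' * γ))
    -- `wh j` is the high term of `ρ j` with respect to `lt`:
    (wh : Fin m → FreeMonoid (Fin d))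
    (hmem : ∀ j, coeff (ρ j) (wh j) ≠ 0)
    (hhigh : ∀ j, ∀ w, coeff (ρ j) w ≠ 0 → w ≠ wh j → lt w (wh j))
    (hcf : CombFree wh) :
    StronglyFree p d τ σ ρ := by
  classical
  have : IsStrictTotalOrder _ lt :=
    { trichotomous a b hab hba := ((htri a b).resolve_left hab).resolve_right hba
      irrefl := hirr
      trans := htrans }
  let _ : LinearOrder (FreeMonoid (Fin d)) := linearOrderOfSTO lt
  have : MulLeftStrictMono (FreeMonoid (Fin d)) :=
    ⟨fun β a b h => show lt (β * a) (β * b) by simpa using hmul a b β 1 h⟩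
  have : MulRightStrictMono (FreeMonoid (Fin d)) :=
    ⟨fun γ a b h => show lt (a * γ) (b * γ) by simpa using hmul a b 1 γ h⟩
  have hhigh' (j : Fin m) : MonoidAlgebra.IsHighTerm (ρ j) (wh j) :=
    ⟨hmem j, fun w hw => (eq_or_ne w (wh j)).elim le_of_eq fun hne => le_of_lt (hhigh j w hw hne)⟩
  have hwt (j : Fin m) : wt τ (wh j) = σ j := mem_Asub_iff.1 (hρhom j) _ (hmem j)
  have hne (j : Fin m) : wh j ≠ 1 := fun h => by
    have := hσ j
    rw [← hwt j, h, wt_one] at this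
    omega
  have hdim := dimB_eq_card_normalWords hτ hcf hhigh' hρhom
  refine ⟨by rw [hdim, normalWords_zero hτ hne, Finset.card_singleton], fun n hn => ?_⟩
  have hcount := congrArg (Nat.cast : ℕ → ℤ) (sum_card_normalWords hτ hcf hne hn)
  push_cast at hcount
  simp only [hdim, ← hwt]
  linarith

/-- Anick's criterion: if `<` is a multiplicative order on the monomials and
the high terms (the `<`-greatest monomials occurring with nonzero coefficient) of the
homogeneous elements `ρ_1,…,ρ_m ∈ I_A` form a combinatorially free sequence of words,
then `ρ_1,…,ρ_m` is strongly free. -/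
theorem stmt_4 (p d m : ℕ) [Fact p.Prime] (hd : 1 ≤ d)
    (τ : Fin d → ℕ) (hτ : ∀ i, 1 ≤ τ i)
    (σ : Fin m → ℕ) (hσ : ∀ j, 1 ≤ σ j)
    (ρ : Fin m → A p d)
    (hρIA : ∀ j, ρ j ∈ IA p d)
    (hρhom : ∀ j, ρ j ∈ Asub p d τ (σ j))
    -- `lt` is a multiplicative order on the monomials:
    (lt : FreeMonoid (Fin d) → FreeMonoid (Fin d) → Prop)
    (hirr : ∀ w, ¬ lt w w)
    (htrans : ∀ w w' w'', lt w w' → lt w' w'' → lt w w'')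
    (htri : ∀ w w', lt w w' ∨ w = w' ∨ lt w' w)
    (hone : ∀ w, w ≠ 1 → lt 1 w)
    (hmul : ∀ α α' β γ, lt α α' → lt (β * α * γ) (β * α' * γ))
    -- `wh j` is the high term of `ρ j` with respect to `lt`:
    (wh : Fin m → FreeMonoid (Fin d))
    (hmem : ∀ j, coeff (ρ j) (wh j) ≠ 0)
    (hhigh : ∀ j, ∀ w, coeff (ρ j) w ≠ 0 → w ≠ wh j → lt w (wh j))
    (hcf : CombFree wh) :
    StronglyFree p d τ σ ρ :=
  stmt_4_general p d m τ hτ σ hσ ρ hρhom lt hirr htrans htri hmul wh hmem hhigh hcf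

end MildStmt
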